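/- Let Δ be a quasifan in a lattice N and let h : |Δ| → ℚ^k be a convex support map on Δ. Then the projected cones P(δ), for δ in the filled graph Λ_h, form a quasifan Σ_h in the lattice N, where P : (N × ℤ^k)_ℚ → N_ℚ is the projection. -/
import Mathlib


/-! Convex geometry over ℚ: polyhedral cones, quasifans, fans, support maps. -/

namespace ToricQuot

variable {E V : Type} [AddCommGroup E] [Module ℚ E] [AddCommGroup V] [Module ℚ V]

/-- The convex cone generated by a set: all finite nonnegative rational combinations. -/
def coneHull (s : Set E) : Set E :=
  {x | ∃ (m : ℕ) (c : Fin m → ℚ) (v : Fin m → E),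
    (∀ i, 0 ≤ c i) ∧ (∀ i, v i ∈ s) ∧ x = ∑ i, c i • v i}

/-- A (rational) polyhedral convex cone: the conic hull of a finite set. -/
def IsPolyCone (σ : Set E) : Prop := ∃ s : Set E, s.Finite ∧ σ = coneHull s

/-- `F` is a face of the cone `σ`: it is cut out of `σ` by a supporting linear form. -/
def IsFaceOf (F σ : Set E) : Prop :=
  ∃ u : E →ₗ[ℚ] ℚ, (∀ x ∈ σ, 0 ≤ u x) ∧ F = {x ∈ σ | u x = 0}

/-- The relative interior of a cone: points not lying on any proper face. -/
def relint (σ : Set E) : Set E :=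
  {x ∈ σ | ∀ F, IsFaceOf F σ → x ∈ F → F = σ}

/-- A quasifan: a finite set of polyhedral cones, closed under taking faces, such that
the intersection of any two of its cones is a face of each. -/
def IsQuasifan (Λ : Set (Set E)) : Prop :=
  Λ.Finite ∧ (∀ σ ∈ Λ, IsPolyCone σ) ∧
  (∀ σ ∈ Λ, ∀ F, IsFaceOf F σ → F ∈ Λ) ∧
  (∀ σ ∈ Λ, ∀ τ ∈ Λ, IsFaceOf (σ ∩ τ) σ)

/-- A cone is strictly convex (pointed) if it contains no line. -/
def IsPointed (σ : Set E) : Prop := σ ∩ (-σ) ⊆ {0}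

/-- A fan: a quasifan all of whose cones are strictly convex. -/
def IsFan (Λ : Set (Set E)) : Prop := IsQuasifan Λ ∧ ∀ σ ∈ Λ, IsPointed σ

/-- The support of a quasifan. -/
def fanSupp (Λ : Set (Set E)) : Set E := ⋃₀ Λ

/-- A support map on a quasifan `Δ`: a map that is linear on every cone of `Δ`. -/
def IsSupportMap (Δ : Set (Set E)) (h : E → V) : Prop :=
  ∀ σ ∈ Δ, ∃ L : E →ₗ[ℚ] V, ∀ x ∈ σ, h x = L x

/-- The graph of a support map over the support of the quasifan. -/
def graphOf (Δ : Set (Set E)) (h : E → V) : Set (E × V) :=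
  {p | ∃ v ∈ fanSupp Δ, p = (v, h v)}

/-- The cone generated by the graph of a support map. -/
def gammaCone (Δ : Set (Set E)) (h : E → V) : Set (E × V) := coneHull (graphOf Δ h)

/-- The filled graph `Λ_h`: the minimal subquasifan of the face quasifan of `γ` whose
support contains the graph, i.e. it is generated by the faces of `γ` whose relative
interior meets the graph. -/
def filledGraph (Δ : Set (Set E)) (h : E → V) : Set (Set (E × V)) :=
  {δ | ∃ δ', IsFaceOf δ' (gammaCone Δ h) ∧ (relint δ' ∩ graphOf Δ h).Nonempty ∧
    IsFaceOf δ δ'}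

/-- A support map is convex if the projection to the first factor is injective on the
support of the filled graph. -/
def IsConvexSM (Δ : Set (Set E)) (h : E → V) : Prop :=
  IsSupportMap Δ h ∧ Set.InjOn (Prod.fst : E × V → E) (⋃₀ filledGraph Δ h)

/-- The quasifan `Σ_h` associated to a convex support map: the projections of the cones
of the filled graph. -/
def sigmaFan (Δ : Set (Set E)) (h : E → V) : Set (Set E) :=
  (Set.image (Prod.fst : E × V → E)) '' filledGraph Δ h

/-- A strictly convex support map. -/
def IsStrictlyConvexSM (Δ : Set (Set E)) (h : E → V) : Prop :=
  IsConvexSM Δ h ∧ sigmaFan Δ h = Δ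


end ToricQuot

namespace ToricQuot
variable {E V : Type} [AddCommGroup E] [Module ℚ E] [AddCommGroup V] [Module ℚ V]

lemma zero_mem_coneHull (s : Set E) : (0:E) ∈ coneHull s :=
  ⟨0, Fin.elim0, Fin.elim0, fun i => i.elim0, fun i => i.elim0, by simp⟩

lemma subset_coneHull (s : Set E) : s ⊆ coneHull s := by
  intro x hx
  exact ⟨1, fun _ => 1, fun _ => x, fun _ => zero_le_one, fun _ => hx, by simp⟩

lemma coneHull_min {s C : Set E} (h0 : (0:E) ∈ C)
    (hadd : ∀ x ∈ C, ∀ y ∈ C, x + y ∈ C)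
    (hsmul : ∀ (c:ℚ), 0 ≤ c → ∀ x ∈ C, c • x ∈ C)
    (hs : s ⊆ C) : coneHull s ⊆ C := by
  rintro x ⟨m, c, v, hc, hv, rfl⟩
  exact Finset.sum_induction _ (· ∈ C) (fun a b ha hb => hadd a ha b hb) h0
    (fun i _ => hsmul (c i) (hc i) (v i) (hs (hv i)))

lemma coneHull_mono {s t : Set E} (h : s ⊆ t) : coneHull s ⊆ coneHull t := by
  rintro x ⟨m, c, v, hc, hv, rfl⟩
  exact ⟨m, c, v, hc, fun i => h (hv i), rfl⟩

lemma add_mem_coneHull {s : Set E} {x y : E} (hx : x ∈ coneHull s)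
    (hy : y ∈ coneHull s) : x + y ∈ coneHull s := by
  obtain ⟨m, c, v, hc, hv, rfl⟩ := hx
  obtain ⟨m', c', v', hc', hv', rfl⟩ := hy
  refine ⟨m + m', Fin.append c c', Fin.append v v', ?_, ?_, ?_⟩
  · exact Fin.addCases (fun j => by simp [Fin.append_left, hc j])
      (fun j => by simp [Fin.append_right, hc' j])
  · exact Fin.addCases (fun j => by simp [Fin.append_left, hv j])
      (fun j => by simp [Fin.append_right, hv' j])
  · rw [Fin.sum_univ_add]
    simp [Fin.append_left, Fin.append_right]

lemma smul_mem_coneHull {s : Set E} {a : ℚ} (ha : 0 ≤ a) {x : E}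
    (hx : x ∈ coneHull s) : a • x ∈ coneHull s := by
  obtain ⟨m, c, v, hc, hv, rfl⟩ := hx
  refine ⟨m, fun i => a * c i, v, fun i => mul_nonneg ha (hc i), hv, ?_⟩
  rw [Finset.smul_sum]
  simp [mul_smul]

lemma coneHull_subset_coneHull {s t : Set E} (h : t ⊆ coneHull s) :
    coneHull t ⊆ coneHull s :=
  coneHull_min (zero_mem_coneHull s) (fun _ hx _ hy => add_mem_coneHull hx hy)
    (fun _ hc _ hx => smul_mem_coneHull hc hx) h

lemma image_coneHull (f : E →ₗ[ℚ] V) (s : Set E) :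
    f '' coneHull s = coneHull (f '' s) := by
  ext x
  constructor
  · rintro ⟨y, ⟨m, c, v, hc, hv, rfl⟩, rfl⟩
    exact ⟨m, c, fun i => f (v i), hc, fun i => ⟨v i, hv i, rfl⟩, by
      simp [map_sum, map_smul]⟩
  · rintro ⟨m, c, w, hc, hw, rfl⟩
    choose v hv hfv using hw
    exact ⟨∑ i, c i • v i, ⟨m, c, v, hc, hv, rfl⟩, by
      simp [map_sum, map_smul, hfv]⟩



/-- A face of `coneHull s` cut out by `u` equals `coneHull` of the generators killed by `u`. -/
lemma face_eq_coneHull_ker {s : Set E} (u : E →ₗ[ℚ] ℚ)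
    (hu : ∀ x ∈ coneHull s, 0 ≤ u x) :
    {x ∈ coneHull s | u x = 0} = coneHull {v ∈ s | u v = 0} := by
  ext x
  constructor
  · rintro ⟨⟨m, c, v, hc, hv, rfl⟩, hx0⟩
    have hterm : ∀ i ∈ Finset.univ, (0:ℚ) ≤ c i * u (v i) := fun i _ =>
      mul_nonneg (hc i) (hu _ (subset_coneHull s (hv i)))
    have hsum : ∑ i, c i * u (v i) = 0 := by
      have := hx0
      simpa [map_sum, map_smul, smul_eq_mul] using this
    have hz : ∀ i ∈ Finset.univ, c i * u (v i) = 0 :=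
      (Finset.sum_eq_zero_iff_of_nonneg hterm).mp hsum
    refine Finset.sum_induction _ (· ∈ coneHull {v ∈ s | u v = 0})
      (fun a b ha hb => add_mem_coneHull ha hb) (zero_mem_coneHull _) (fun i _ => ?_)
    by_cases h0 : u (v i) = 0
    · exact smul_mem_coneHull (hc i) (subset_coneHull _ ⟨hv i, h0⟩)
    · have : c i = 0 := by
        rcases mul_eq_zero.mp (hz i (Finset.mem_univ i)) with h | h
        · exact h
        · exact absurd h h0
      simp [this, zero_mem_coneHull]
  · intro hx
    have h1 : x ∈ coneHull s :=
      coneHull_mono (fun v hv => hv.1) hx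
    refine ⟨h1, ?_⟩
    have : coneHull {v ∈ s | u v = 0} ⊆ {x | u x = 0} := by
      refine coneHull_min (by simp) (fun a ha b hb => by simp_all) ?_ ?_
      · intro c _ x hx; simp_all
      · intro v hv; exact hv.2
    exact this hx

lemma IsFaceOf.subset {F σ : Set E} (h : IsFaceOf F σ) : F ⊆ σ := by
  obtain ⟨u, _, rfl⟩ := h; exact fun x hx => hx.1

lemma isFaceOf_refl (σ : Set E) : IsFaceOf σ σ :=
  ⟨0, fun x _ => le_refl 0, by simp⟩

lemma IsFaceOf.polyCone {F σ : Set E} (hσ : IsPolyCone σ) (h : IsFaceOf F σ) :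
    IsPolyCone F := by
  obtain ⟨s, hs, rfl⟩ := hσ
  obtain ⟨u, hu, rfl⟩ := h
  exact ⟨{v ∈ s | u v = 0}, hs.subset (fun v hv => hv.1),
    face_eq_coneHull_ker u hu⟩

/-- Intersection of two faces of the same cone is a face of the first. -/
lemma isFaceOf_inter {F F' σ : Set E} (hF : IsFaceOf F σ) (hF' : IsFaceOf F' σ) :
    IsFaceOf (F ∩ F') F := by
  obtain ⟨u, hu, rfl⟩ := hF
  obtain ⟨u', hu', rfl⟩ := hF'
  refine ⟨u', fun x hx => hu' x hx.1, ?_⟩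
  ext x
  constructor
  · rintro ⟨⟨hσ, h0⟩, ⟨_, h0'⟩⟩; exact ⟨⟨hσ, h0⟩, h0'⟩
  · rintro ⟨⟨hσ, h0⟩, h0'⟩; exact ⟨⟨hσ, h0⟩, hσ, h0'⟩

/-- Transitivity of faces for polyhedral cones. -/
lemma IsFaceOf.trans {G F σ : Set E} (hσ : IsPolyCone σ)
    (hGF : IsFaceOf G F) (hFσ : IsFaceOf F σ) : IsFaceOf G σ := by
  obtain ⟨s, hsfin, rfl⟩ := hσ
  obtain ⟨u, hu, rfl⟩ := hFσ
  obtain ⟨w, hw, rfl⟩ := hGF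
  -- choose N with N > (-w v)/(u v) for all generators v with 0 < u v
  obtain ⟨N₀, hN₀⟩ := (Set.Finite.image (fun v => -w v / u v)
    (hsfin.subset (Set.sep_subset s (fun v => 0 < u v)))).bddAbove
  set N : ℚ := max N₀ 0 + 1 with hN
  have hNpos : ∀ v ∈ s, 0 < u v → 0 < N * u v + w v := by
    intro v hv huv
    have hmem : -w v / u v ∈ (fun v => -w v / u v) '' {v ∈ s | 0 < u v} :=
      ⟨v, ⟨hv, huv⟩, rfl⟩
    have h1 : -w v / u v ≤ N₀ := hN₀ hmem
    have h2 : -w v / u v < N := lt_of_le_of_lt h1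
      (by rw [hN]; have := le_max_left N₀ (0:ℚ); linarith)
    have := (div_lt_iff₀ huv).mp h2
    linarith
  set u' : E →ₗ[ℚ] ℚ := N • u + w with hu'
  have hgen : ∀ v ∈ s, 0 ≤ u' v := by
    intro v hv
    rcases lt_or_eq_of_le (hu v (subset_coneHull s hv)) with hlt | heq
    · exact le_of_lt (by simpa [hu', smul_eq_mul] using hNpos v hv hlt)
    · have hvF : v ∈ {x ∈ coneHull s | u x = 0} := ⟨subset_coneHull s hv, heq.symm⟩
      have := hw v hvF
      simp [hu', smul_eq_mul, ← heq, this]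
  have hnn : ∀ x ∈ coneHull s, 0 ≤ u' x := by
    intro x hx
    have hsub : coneHull s ⊆ {x | 0 ≤ u' x} := by
      refine coneHull_min (by simp) ?_ ?_ hgen
      · intro a ha b hb; simp only [Set.mem_setOf_eq, map_add] at *; linarith
      · intro c hc x hx; simp only [Set.mem_setOf_eq, map_smul, smul_eq_mul] at *
        exact mul_nonneg hc hx
    exact hsub hx
  refine ⟨u', hnn, ?_⟩
  ext x
  constructor
  · rintro ⟨⟨hxσ, hxu⟩, hxw⟩
    exact ⟨hxσ, by simp [hu', smul_eq_mul, hxu, hxw]⟩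
  · rintro ⟨hxσ, hxu'⟩
    have hker : x ∈ coneHull {v ∈ s | u' v = 0} :=
      (face_eq_coneHull_ker u' hnn ▸ (⟨hxσ, hxu'⟩ : x ∈ {x ∈ coneHull s | u' x = 0}))
    -- each generator with u' v = 0 lies in G
    have hsubG : {v ∈ s | u' v = 0} ⊆
        {x ∈ {x ∈ coneHull s | u x = 0} | w x = 0} := by
      rintro v ⟨hv, hv0⟩
      have huv : u v = 0 := by
        by_contra hne
        have hlt : 0 < u v := lt_of_le_of_ne (hu v (subset_coneHull s hv)) (Ne.symm hne)
        have := hNpos v hv hlt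
        rw [hu'] at hv0
        simp only [LinearMap.add_apply, LinearMap.smul_apply, smul_eq_mul] at hv0
        linarith
      have hwv : w v = 0 := by
        rw [hu'] at hv0
        simp only [LinearMap.add_apply, LinearMap.smul_apply, smul_eq_mul, huv] at hv0
        linarith
      exact ⟨⟨subset_coneHull s hv, huv⟩, hwv⟩
    have hGclosed : coneHull {v ∈ s | u' v = 0} ⊆
        {x ∈ {x ∈ coneHull s | u x = 0} | w x = 0} := by
      refine coneHull_min ?_ ?_ ?_ hsubG
      · exact ⟨⟨zero_mem_coneHull s, by simp⟩, by simp⟩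
      · rintro a ⟨⟨haσ, hau⟩, haw⟩ b ⟨⟨hbσ, hbu⟩, hbw⟩
        exact ⟨⟨add_mem_coneHull haσ hbσ, by simp [hau, hbu]⟩, by simp [haw, hbw]⟩
      · rintro c hc x ⟨⟨hxσ, hxu⟩, hxw⟩
        exact ⟨⟨smul_mem_coneHull hc hxσ, by simp [hxu]⟩, by simp [hxw]⟩
    exact hGclosed hker

/-- The set of faces of a polyhedral cone is finite. -/
lemma faces_finite {s : Set E} (hs : s.Finite) :
    {F | IsFaceOf F (coneHull s)}.Finite := by
  refine (hs.finite_subsets.image (fun t => coneHull t)).subset ?_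
  rintro F ⟨u, hu, rfl⟩
  exact ⟨{v ∈ s | u v = 0}, fun v hv => hv.1, (face_eq_coneHull_ker u hu).symm⟩



/-- Pushing a face forward along a linear map injective on the cone. -/
lemma isFaceOf_image_of_injOn (f : E →ₗ[ℚ] V) {δ G : Set E}
    (hδ : IsPolyCone δ) (hinj : Set.InjOn f δ) (hG : IsFaceOf G δ) :
    IsFaceOf (f '' G) (f '' δ) := by
  obtain ⟨w, hw, rfl⟩ := hG
  obtain ⟨s, -, rfl⟩ := hδ
  set δ := coneHull s
  -- the subspace spanned by δ is δ - δ
  set D : Submodule ℚ E :=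
    { carrier := {x | ∃ a ∈ δ, ∃ b ∈ δ, x = a - b}
      add_mem' := by
        rintro x y ⟨a, ha, b, hb, rfl⟩ ⟨a', ha', b', hb', rfl⟩
        exact ⟨a + a', add_mem_coneHull ha ha', b + b',
          add_mem_coneHull hb hb', by abel⟩
      zero_mem' := ⟨0, zero_mem_coneHull s, 0, zero_mem_coneHull s, by simp⟩
      smul_mem' := by
        rintro c x ⟨a, ha, b, hb, rfl⟩
        rcases le_or_gt 0 c with hc | hc
        · exact ⟨c • a, smul_mem_coneHull hc ha, c • b, smul_mem_coneHull hc hb,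
            by rw [smul_sub]⟩
        · refine ⟨(-c) • b, smul_mem_coneHull (by linarith) hb,
            (-c) • a, smul_mem_coneHull (by linarith) ha, ?_⟩
          rw [smul_sub, neg_smul, neg_smul]; abel } with hD
  have hδD : ∀ {y}, y ∈ δ → y ∈ D := fun {y} hy =>
    ⟨y, hy, 0, zero_mem_coneHull s, by simp⟩
  -- f is injective on D
  set g : D →ₗ[ℚ] V := f ∘ₗ D.subtype with hg
  have hginj : Function.Injective g := by
    rw [← LinearMap.ker_eq_bot, LinearMap.ker_eq_bot']
    rintro ⟨x, a, ha, b, hb, rfl⟩ hx0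
    have : f a = f b := by
      have : f (a - b) = 0 := by simpa [hg] using hx0
      rw [map_sub, sub_eq_zero] at this; exact this
    have hab : a = b := hinj ha hb this
    exact Subtype.ext (by simp [hab])
  set e := LinearEquiv.ofInjective g hginj with he
  set w' : LinearMap.range g →ₗ[ℚ] ℚ :=
    (w ∘ₗ D.subtype) ∘ₗ (e.symm : LinearMap.range g →ₗ[ℚ] D) with hw'
  obtain ⟨u, hu⟩ := w'.exists_extend
  -- key computation: u (f y) = w y for y ∈ δ
  have hkey : ∀ y ∈ δ, u (f y) = w y := by
    intro y hy
    have hyD : (⟨y, hδD hy⟩ : D) = e.symm ⟨f y, ⟨⟨y, hδD hy⟩, rfl⟩⟩ := by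
      apply e.injective
      rw [LinearEquiv.apply_symm_apply]
      refine Subtype.ext ?_
      rw [he, LinearEquiv.ofInjective_apply]
      simp [hg]
    have := congrArg (fun (φ : LinearMap.range g →ₗ[ℚ] ℚ) =>
      φ ⟨f y, ⟨⟨y, hδD hy⟩, rfl⟩⟩) hu
    simp only [LinearMap.comp_apply, Submodule.subtype_apply, hw'] at this ⊢
    rw [this]
    simp only [LinearEquiv.coe_coe]
    rw [← hyD]
  refine ⟨u, ?_, ?_⟩
  · rintro x ⟨y, hy, rfl⟩
    rw [hkey y hy]; exact hw y hy
  · ext x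
    constructor
    · rintro ⟨y, ⟨hy, hwy⟩, rfl⟩
      exact ⟨⟨y, hy, rfl⟩, by rw [hkey y hy]; exact hwy⟩
    · rintro ⟨⟨y, hy, rfl⟩, hx0⟩
      exact ⟨y, ⟨hy, by rw [← hkey y hy]; exact hx0⟩, rfl⟩



/-- The cone over the graph of a support map is polyhedral. -/
lemma gammaCone_polyCone {Δ : Set (Set E)} {h : E → V}
    (hfin : Δ.Finite) (hpoly : ∀ σ ∈ Δ, IsPolyCone σ) (hsm : IsSupportMap Δ h) :
    IsPolyCone (gammaCone Δ h) := by
  choose L hL using hsm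
  choose s hsfin hσeq using hpoly
  refine ⟨⋃ (σ : Δ), (⇑(LinearMap.prod LinearMap.id (L σ σ.2))) '' (s σ σ.2),
    ?_, ?_⟩
  · have := hfin.to_subtype
    exact Set.finite_iUnion (fun σ => (hsfin σ σ.2).image _)
  · apply Set.Subset.antisymm
    · apply coneHull_subset_coneHull
      rintro p ⟨v, hv, rfl⟩
      obtain ⟨σ, hσ, hvσ⟩ := hv
      have hp : (v, h v) = LinearMap.prod LinearMap.id (L σ hσ) v := by
        simp [LinearMap.prod_apply, hL σ hσ v hvσ]
      rw [hp]
      have hv2 : v ∈ coneHull (s σ hσ) := (hσeq σ hσ) ▸ hvσ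
      have : LinearMap.prod LinearMap.id (L σ hσ) v ∈
          ⇑(LinearMap.prod LinearMap.id (L σ hσ)) '' coneHull (s σ hσ) :=
        ⟨v, hv2, rfl⟩
      rw [image_coneHull] at this
      exact coneHull_mono (Set.subset_iUnion
        (fun (σ' : Δ) => (⇑(LinearMap.prod LinearMap.id (L σ' σ'.2))) '' (s σ' σ'.2))
        ⟨σ, hσ⟩) this
    · apply coneHull_mono
      rintro p hp
      simp only [Set.mem_iUnion] at hp
      obtain ⟨⟨σ, hσ⟩, x, hx, rfl⟩ := hp
      have hxσ : x ∈ σ := (hσeq σ hσ) ▸ subset_coneHull _ hx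
      refine ⟨x, ⟨σ, hσ, hxσ⟩, ?_⟩
      simp [LinearMap.prod_apply, hL σ hσ x hxσ]

end ToricQuot
open ToricQuot in
/-- **Lemma 2.6.** If the support map `h : |Δ| → ℚ^k` on the quasifan `Δ` in the lattice
`N = ℤ^n` is convex, then the projected cones `P(δ)`, `δ ∈ Λ_h`, form a quasifan `Σ_h`
in the lattice `N`. -/
theorem quasifan_of_convex_support_map (n k : ℕ) (Δ : Set (Set (Fin n → ℚ)))
    (h : (Fin n → ℚ) → (Fin k → ℚ)) (hΔ : IsQuasifan Δ)
    (hconv : IsConvexSM Δ h) : IsQuasifan (sigmaFan Δ h) := by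
  obtain ⟨hsm, hinj⟩ := hconv
  obtain ⟨hfin, hpoly, hfaces, hint⟩ := hΔ
  have hγ : IsPolyCone (gammaCone Δ h) := gammaCone_polyCone hfin hpoly hsm
  have hFG : ∀ δ ∈ filledGraph Δ h, IsFaceOf δ (gammaCone Δ h) := by
    rintro δ ⟨δ', h1, h2, h3⟩
    exact IsFaceOf.trans hγ h3 h1
  have hFGfin : (filledGraph Δ h).Finite := by
    obtain ⟨T, hTfin, hTγ⟩ := hγ
    have hff : {F | IsFaceOf F (gammaCone Δ h)}.Finite := by
      rw [hTγ]; exact faces_finite hTfin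
    exact hff.subset hFG
  have hfst : ∀ δ : Set ((Fin n → ℚ) × (Fin k → ℚ)),
      ⇑(LinearMap.fst ℚ (Fin n → ℚ) (Fin k → ℚ)) '' δ = Prod.fst '' δ :=
    fun δ => rfl
  refine ⟨hFGfin.image _, ?_, ?_, ?_⟩
  · rintro σ ⟨δ, hδ, rfl⟩
    obtain ⟨s, hs, rfl⟩ := (hFG δ hδ).polyCone hγ
    refine ⟨Prod.fst '' s, hs.image _, ?_⟩
    show Prod.fst '' coneHull s = _
    rw [← hfst, image_coneHull, hfst]
  · rintro σ ⟨δ, hδ, rfl⟩ F ⟨u, hu, rfl⟩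
    set P := LinearMap.fst ℚ (Fin n → ℚ) (Fin k → ℚ) with hP
    set G : Set ((Fin n → ℚ) × (Fin k → ℚ)) := {y ∈ δ | (u ∘ₗ P) y = 0} with hG
    have hGface : IsFaceOf G δ :=
      ⟨u ∘ₗ P, fun y hy => hu _ ⟨y, hy, rfl⟩, rfl⟩
    have hGmem : G ∈ filledGraph Δ h := by
      obtain ⟨δ', h1, h2, h3⟩ := hδ
      exact ⟨δ', h1, h2, IsFaceOf.trans (h1.polyCone hγ) hGface h3⟩
    refine ⟨G, hGmem, ?_⟩
    ext x
    constructor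
    · rintro ⟨y, ⟨hy, hy0⟩, rfl⟩
      exact ⟨⟨y, hy, rfl⟩, hy0⟩
    · rintro ⟨⟨y, hy, rfl⟩, h0⟩
      exact ⟨y, ⟨hy, h0⟩, rfl⟩
  · rintro σ ⟨δ₁, hδ₁, rfl⟩ τ ⟨δ₂, hδ₂, rfl⟩
    have h12 : IsFaceOf (δ₁ ∩ δ₂) δ₁ := isFaceOf_inter (hFG _ hδ₁) (hFG _ hδ₂)
    have himg : Prod.fst '' (δ₁ ∩ δ₂) =
        Set.image Prod.fst δ₁ ∩ Set.image Prod.fst δ₂ :=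
      hinj.image_inter (Set.subset_sUnion_of_mem hδ₁) (Set.subset_sUnion_of_mem hδ₂)
    rw [← himg]
    have := isFaceOf_image_of_injOn (LinearMap.fst ℚ (Fin n → ℚ) (Fin k → ℚ))
      ((hFG _ hδ₁).polyCone hγ)
      (hinj.mono (Set.subset_sUnion_of_mem hδ₁)) h12
    rwa [hfst, hfst] at this
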